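/- Let Z be a stratifiable space and z₀ ∈ Z, and suppose S_ω × Z is a k_R-space. If {Z_n} is a decreasing network at z₀ in Z (i.e., each Z_n contains z₀, every neighborhood of z₀ contains some Z_n, and Z_{n+1} ⊆ Z_n for all n), then the closure of Z_n is compact for some n. -/

import Mathlib

open Set Filter Topology Cardinal

/-- A `k`-space: a set is closed whenever its trace on every compact subset is closed. -/
def IsKSpace (X : Type*) [TopologicalSpace X] : Prop :=
  ∀ C : Set X, (∀ K : Set X, IsCompact K → IsClosed (Subtype.val ⁻¹' C : Set K)) → IsClosed C

/-- A `k_R`-space: every real-valued function which is continuous on each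
compact subset is continuous. -/
def IsKRSpace (X : Type*) [TopologicalSpace X] : Prop :=
  ∀ f : X → ℝ, (∀ K : Set X, IsCompact K → ContinuousOn f K) → Continuous f
/-- The sequential fan with spokes indexed by `κ`: underlying set is
`Option (κ × ℕ)`, with `none` the apex and `some (α, n)` the `n`-th point
of the `α`-th spoke. -/
def Fan (κ : Type*) : Type _ := Option (κ × ℕ)

/-- The quotient topology on the fan: each point `some (α, n)` is isolated and
a set containing the apex is open iff it contains a tail of every spoke. -/
instance Fan.instTopologicalSpace (κ : Type*) : TopologicalSpace (Fan κ) where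
  IsOpen s := (none : Option (κ × ℕ)) ∈ s → ∀ α : κ, {n : ℕ | (some (α, n) : Option (κ × ℕ)) ∉ s}.Finite
  isOpen_univ := by intro _ α; exact Set.finite_empty.subset (fun n hn => hn (Set.mem_univ _))
  isOpen_inter := by
    intro s t hs ht hmem α
    refine ((hs hmem.1 α).union (ht hmem.2 α)).subset ?_
    intro n hn
    by_contra h
    simp only [Set.mem_union, Set.mem_setOf_eq] at h
    push_neg at h
    exact hn ⟨h.1, h.2⟩
  isOpen_sUnion := by
    intro S hS hmem α
    obtain ⟨s, hsS, hs⟩ := hmem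
    refine (hS s hsS hs α).subset ?_
    intro n hn hns
    exact hn (Set.mem_sUnion.2 ⟨s, hsS, hns⟩)

/-- The apex of the sequential fan. -/
def Fan.apex {κ : Type*} : Fan κ := (none : Option (κ × ℕ))

/-- The `n`-th point of the `α`-th spoke of the sequential fan. -/
def Fan.pt {κ : Type*} (α : κ) (n : ℕ) : Fan κ := (some (α, n) : Option (κ × ℕ))

/-- A space `Z` is stratifiable if to each open `U` one can assign open sets `U_n`
with `closure U_n ⊆ U`, `⋃ U_n = U`, monotonically in `U`. -/
def IsStratifiable (Z : Type*) [TopologicalSpace Z] : Prop :=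
  ∃ S : Set Z → ℕ → Set Z,
    ∀ U : Set Z, IsOpen U →
      ((∀ n, IsOpen (S U n) ∧ closure (S U n) ⊆ U) ∧ (⋃ n, S U n) = U ∧
        ∀ V : Set Z, IsOpen V → U ⊆ V → ∀ n, S U n ⊆ S V n)

namespace Fan
variable {κ : Type*}

lemma isOpen_iff' {s : Set (Fan κ)} :
    IsOpen s ↔ (Fan.apex ∈ s → ∀ α : κ, {n : ℕ | Fan.pt α n ∉ s}.Finite) := Iff.rfl

lemma apex_ne_pt (α : κ) (n : ℕ) : (Fan.apex : Fan κ) ≠ Fan.pt α n := fun h => by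
  exact Option.some_ne_none (α, n) (show (none : Option (κ × ℕ)) = some (α, n) from h).symm

lemma pt_inj {α α' : κ} {n n' : ℕ} (h : Fan.pt α n = Fan.pt α' n') : α = α' ∧ n = n' := by
  have := Option.some_injective _ h
  exact ⟨congrArg Prod.fst this, congrArg Prod.snd this⟩

lemma isOpen_singleton_pt (α : κ) (n : ℕ) : IsOpen ({Fan.pt α n} : Set (Fan κ)) := by
  rw [isOpen_iff']
  intro h
  exact absurd h (fun h => apex_ne_pt α n h)

lemma cases' (x : Fan κ) : x = Fan.apex ∨ ∃ α n, x = Fan.pt α n := by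
  cases x with
  | none => exact Or.inl rfl
  | some q => exact Or.inr ⟨q.1, q.2, rfl⟩

/-- tails along a finite set of spokes -/
lemma isOpen_tail (F : Finset κ) (m : ℕ) :
    IsOpen {x : Fan κ | ∀ α k, x = Fan.pt α k → α ∈ F → m ≤ k} := by
  rw [isOpen_iff']
  intro _ α
  refine (Set.finite_Iio m).subset ?_
  intro n hn
  simp only [Set.mem_setOf_eq] at hn
  push_neg at hn
  obtain ⟨α', k', heq, hF, hk⟩ := hn
  obtain ⟨h1, h2⟩ := pt_inj heq
  rw [Set.mem_Iio]
  omega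

lemma apex_mem_tail (F : Finset κ) (m : ℕ) :
    Fan.apex ∈ {x : Fan κ | ∀ α k, x = Fan.pt α k → α ∈ F → m ≤ k} := by
  intro α k h
  exact absurd h (apex_ne_pt α k)

lemma tail_of_isOpen {s : Set (Fan κ)} (hs : IsOpen s) (h : Fan.apex ∈ s) (α : κ) :
    {n : ℕ | Fan.pt α n ∉ s}.Finite := (isOpen_iff'.1 hs) h α

/-- a compact subset of the fan over `ℕ` meets only finitely many spokes -/
lemma finite_spokes {K : Set (Fan ℕ)} (hK : IsCompact K) :
    {α : ℕ | ∃ k, Fan.pt α k ∈ K}.Finite := by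
  classical
  by_contra hinf
  rw [← Set.not_infinite, not_not] at hinf
  set I := {α : ℕ | ∃ k, Fan.pt α k ∈ K} with hI
  have hkex : ∀ α : ℕ, ∃ k, α ∈ I → Fan.pt α k ∈ K := by
    intro α
    by_cases hα : α ∈ I
    · obtain ⟨k, hk⟩ := hα
      exact ⟨k, fun _ => hk⟩
    · exact ⟨0, fun h => absurd h hα⟩
  choose kk hkk using hkex
  set D : Set (Fan ℕ) := {x | ∃ α ∈ I, x = Fan.pt α (kk α)} with hD
  have hDco : IsOpen Dᶜ := by
    rw [isOpen_iff']
    intro _ α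
    refine (Set.finite_singleton (kk α)).subset ?_
    intro n hn
    rw [Set.mem_setOf_eq, Set.notMem_compl_iff] at hn
    obtain ⟨α', hα', heq⟩ := hn
    obtain ⟨h1, h2⟩ := pt_inj heq
    rw [Set.mem_singleton_iff, h2, h1]
  -- cover
  set cov : Option ℕ → Set (Fan ℕ) := fun o => match o with
    | none => Dᶜ
    | some α => {Fan.pt α (kk α)} with hcov
  have hcovopen : ∀ o, IsOpen (cov o) := by
    intro o
    match o with
    | none => exact hDco
    | some α => exact isOpen_singleton_pt α (kk α)
  have hcovers : K ⊆ ⋃ o, cov o := by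
    intro x _
    by_cases hx : x ∈ D
    · obtain ⟨α, hα, heq⟩ := hx
      exact Set.mem_iUnion.2 ⟨some α, by rw [heq]; exact rfl⟩
    · exact Set.mem_iUnion.2 ⟨none, hx⟩
  obtain ⟨t, ht⟩ := hK.elim_finite_subcover cov hcovopen hcovers
  -- I is infinite: find α ∈ I with some α ∉ t
  have : ∃ α ∈ I, some α ∉ t := by
    by_contra hall
    push_neg at hall
    refine hinf ((t.finite_toSet.image (fun o => o.getD 0)).subset ?_)
    intro α hα
    exact ⟨some α, hall α hα, rfl⟩
  obtain ⟨α, hα, hnt⟩ := this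
  have hmem : Fan.pt α (kk α) ∈ K := hkk α hα
  obtain ⟨o, hot, hmo⟩ := Set.mem_iUnion₂.1 (ht hmem)
  match o with
  | none => exact hmo ⟨α, hα, rfl⟩
  | some β =>
      have := Set.mem_singleton_iff.1 hmo
      obtain ⟨h1, h2⟩ := pt_inj this
      rw [h1] at hnt
      exact hnt hot

end Fan


section Aux
variable {Z : Type*} [TopologicalSpace Z]

/-- The property of being a stratification assignment. -/
def StratOn (S : Set Z → ℕ → Set Z) : Prop :=
  ∀ U : Set Z, IsOpen U →
      ((∀ n, IsOpen (S U n) ∧ closure (S U n) ⊆ U) ∧ (⋃ n, S U n) = U ∧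
        ∀ V : Set Z, IsOpen V → U ⊆ V → ∀ n, S U n ⊆ S V n)

lemma StratOn.mem_stratum {S : Set Z → ℕ → Set Z} (hS : StratOn S) {U : Set Z}
    (hU : IsOpen U) {x : Z} (hx : x ∈ U) : ∃ n, x ∈ S U n := by
  have := (hS U hU).2.1
  rw [← this] at hx
  exact Set.mem_iUnion.1 hx

lemma StratOn.normalSpace {S : Set Z → ℕ → Set Z} (hS : StratOn S) : NormalSpace Z := by
  constructor
  intro s t hs ht hd
  have hU : IsOpen tᶜ := ht.isOpen_compl
  have hV : IsOpen sᶜ := hs.isOpen_compl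
  refine ⟨⋃ n, S tᶜ n \ ⋃ m ∈ {m | m ≤ n}, closure (S sᶜ m),
          ⋃ n, S sᶜ n \ ⋃ m ∈ {m | m ≤ n}, closure (S tᶜ m), ?_, ?_, ?_, ?_, ?_⟩
  · exact isOpen_iUnion fun n => ((hS tᶜ hU).1 n).1.sdiff
      ((Set.finite_le_nat n).isClosed_biUnion fun m _ => isClosed_closure)
  · exact isOpen_iUnion fun n => ((hS sᶜ hV).1 n).1.sdiff
      ((Set.finite_le_nat n).isClosed_biUnion fun m _ => isClosed_closure)
  · intro x hx
    have hxU : x ∈ tᶜ := fun hxt => hd.le_bot ⟨hx, hxt⟩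
    obtain ⟨n, hn⟩ := hS.mem_stratum hU hxU
    refine Set.mem_iUnion.2 ⟨n, hn, ?_⟩
    intro hmem
    obtain ⟨m, _, hm⟩ := Set.mem_iUnion₂.1 hmem
    exact ((hS sᶜ hV).1 m).2 hm hx
  · intro x hx
    have hxV : x ∈ sᶜ := fun hxs => hd.le_bot ⟨hxs, hx⟩
    obtain ⟨n, hn⟩ := hS.mem_stratum hV hxV
    refine Set.mem_iUnion.2 ⟨n, hn, ?_⟩
    intro hmem
    obtain ⟨m, _, hm⟩ := Set.mem_iUnion₂.1 hmem
    exact ((hS tᶜ hU).1 m).2 hm hx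
  · rw [Set.disjoint_left]
    rintro x hx1 hx2
    obtain ⟨n, hn1, hn2⟩ := Set.mem_iUnion.1 hx1
    obtain ⟨n', hn'1, hn'2⟩ := Set.mem_iUnion.1 hx2
    rcases le_total n n' with h | h
    · exact hn'2 (Set.mem_iUnion₂.2 ⟨n, h, subset_closure hn1⟩)
    · exact hn2 (Set.mem_iUnion₂.2 ⟨n', h, subset_closure hn'1⟩)

/-- A cluster point of a sequence lies in any closed set eventually containing the sequence. -/
lemma mapClusterPt_mem_closed {u : ℕ → Z} {y : Z} (hy : MapClusterPt y atTop u)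
    {C : Set Z} (hC : IsClosed C) {m : ℕ} (h : ∀ k, m ≤ k → u k ∈ C) : y ∈ C := by
  by_contra hyC
  have hfreq := (mapClusterPt_iff_frequently.1 hy) Cᶜ (hC.isOpen_compl.mem_nhds hyC)
  obtain ⟨k, hk1, hk2⟩ := (hfreq.and_eventually (eventually_ge_atTop m)).exists
  exact hk1 (h k hk2)

/-- Creede: a closed countably compact subset of a stratifiable space is compact. -/
lemma StratOn.isCompact_of_cc {S : Set Z → ℕ → Set Z} (hS : StratOn S)
    {A : Set Z} (hA : IsClosed A)
    (hcc : ∀ u : ℕ → Z, (∀ m, u m ∈ A) → ∃ y, MapClusterPt y atTop u) :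
    IsCompact A := by
  classical
  refine isCompact_of_finite_subcover fun {ι} U hUopen hcov => ?_
  by_contra hfin
  push_neg at hfin
  have hres : ∀ t : Finset ι, ∃ n : ℕ, ∃ p : Z × ι,
      (p.1 ∈ A \ ⋃ i ∈ t, U i) ∧ p.1 ∈ S (U p.2) n := by
    intro t
    obtain ⟨z, hzA, hz⟩ := Set.not_subset.1 (hfin t)
    obtain ⟨i, hi⟩ := Set.mem_iUnion.1 (hcov hzA)
    obtain ⟨n, hn⟩ := hS.mem_stratum (hUopen i) hi
    exact ⟨n, (z, i), ⟨hzA, hz⟩, hn⟩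
  let lvl : Finset ι → ℕ := fun t => Nat.find (hres t)
  let pick : Finset ι → Z × ι := fun t => (Nat.find_spec (hres t)).choose
  have pick_spec : ∀ t, ((pick t).1 ∈ A \ ⋃ i ∈ t, U i) ∧
      (pick t).1 ∈ S (U (pick t).2) (lvl t) := fun t => (Nat.find_spec (hres t)).choose_spec
  -- iterate
  let T : ℕ → Finset ι := fun m => Nat.rec ∅ (fun _ t => insert (pick t).2 t) m
  have hTsucc : ∀ m, T (m + 1) = insert (pick (T m)).2 (T m) := fun m => rfl
  have hTmono : ∀ m m', m ≤ m' → T m ⊆ T m' := by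
    intro m m' h
    induction m' with
    | zero => rw [Nat.le_zero.1 h]
    | succ k ih =>
      by_cases hm : m ≤ k
      · exact (ih hm).trans (by rw [hTsucc k]; exact Finset.subset_insert _ _)
      · have : m = k + 1 := by omega
        rw [this]
  set z : ℕ → Z := fun m => (pick (T m)).1 with hz
  set e : ℕ → ι := fun m => (pick (T m)).2 with he
  set L : ℕ → ℕ := fun m => lvl (T m) with hL
  have hzA : ∀ m, z m ∈ A := fun m => (pick_spec (T m)).1.1
  have hznot : ∀ m i, i ∈ T m → z m ∉ U i := by
    intro m i hi hzi
    exact (pick_spec (T m)).1.2 (Set.mem_iUnion₂.2 ⟨i, hi, hzi⟩)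
  have heT : ∀ m m', m < m' → e m ∈ T m' := by
    intro m m' h
    exact hTmono (m+1) m' h ((hTsucc m) ▸ Finset.mem_insert_self _ _)
  have hzS : ∀ m, z m ∈ S (U (e m)) (L m) := fun m => (pick_spec (T m)).2
  -- a cluster point bounds the levels
  obtain ⟨y, hy⟩ := hcc z hzA
  have hyR : ∀ m, y ∈ A \ ⋃ i ∈ T m, U i := by
    intro m
    refine mapClusterPt_mem_closed hy (hA.sdiff (isOpen_biUnion fun i _ => hUopen i)) (m := m) ?_
    intro k hk
    exact ⟨hzA k, fun hmem => by
      obtain ⟨i, hi, hui⟩ := Set.mem_iUnion₂.1 hmem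
      exact hznot k i (hTmono m k hk hi) hui⟩
  obtain ⟨iy, hiy⟩ := Set.mem_iUnion.1 (hcov (hyR 0).1)
  obtain ⟨ny, hny⟩ := hS.mem_stratum (hUopen iy) hiy
  have hLb : ∀ m, L m ≤ ny := by
    intro m
    exact Nat.find_le ⟨(y, iy), hyR m, hny⟩
  -- pigeonhole: some level occurs infinitely often
  obtain ⟨v, hv⟩ := Finite.exists_infinite_fiber (fun m => (⟨L m, Nat.lt_succ_of_le (hLb m)⟩ : Fin (ny+1)))
  have hMinf : {m | L m = v.1}.Infinite := by
    by_contra hfinM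
    rw [Set.not_infinite] at hfinM
    have hfin2 : ((fun m => (⟨L m, Nat.lt_succ_of_le (hLb m)⟩ : Fin (ny+1))) ⁻¹' {v}).Finite := by
      refine hfinM.subset ?_
      intro m hm
      simp only [Set.mem_preimage, Set.mem_singleton_iff] at hm
      exact congrArg Fin.val hm
    exact (not_infinite_iff_finite.2 hfin2.to_subtype) hv
  set p : ℕ → Prop := fun m => L m = v.1 with hp
  have hpinf : (setOf p).Infinite := hMinf
  set nth : ℕ → ℕ := Nat.nth p with hnth
  have hnthp : ∀ j, L (nth j) = v.1 := fun j => Nat.nth_mem_of_infinite hpinf j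
  have hnthmono : StrictMono nth := Nat.nth_strictMono hpinf
  -- second cluster point
  obtain ⟨y', hy'⟩ := hcc (fun j => z (nth j)) (fun j => hzA (nth j))
  set W : Set Z := ⋃ j, U (e (nth j)) with hW
  have hWopen : IsOpen W := isOpen_iUnion fun j => hUopen _
  have hsub : ∀ j, z (nth j) ∈ S W v.1 := by
    intro j
    have h1 : z (nth j) ∈ S (U (e (nth j))) v.1 := hnthp j ▸ hzS (nth j)
    exact (hS (U (e (nth j))) (hUopen _)).2.2 W hWopen (Set.subset_iUnion (fun j => U (e (nth j))) j) v.1 h1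
  have hy'mem : y' ∈ closure (S W v.1) :=
    mapClusterPt_mem_closed hy' isClosed_closure (m := 0) (fun k _ => subset_closure (hsub k))
  have hy'W : y' ∈ W := ((hS W hWopen).1 v.1).2 hy'mem
  obtain ⟨j0, hj0⟩ := Set.mem_iUnion.1 hy'W
  have hfreq := (mapClusterPt_iff_frequently.1 hy') (U (e (nth j0))) ((hUopen _).mem_nhds hj0)
  obtain ⟨j, hj1, hj2⟩ := (hfreq.and_eventually (eventually_ge_atTop (j0 + 1))).exists
  have hlt : nth j0 < nth j := hnthmono (by omega)
  exact hznot (nth j) (e (nth j0)) (heT _ _ hlt) hj1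
/-- From a cluster-point-free sequence in a stratifiable normal space, construct
continuous bump functions with locally finite "supports". -/
lemma StratOn.bump_family {S : Set Z → ℕ → Set Z} (hS : StratOn S) (hnorm : NormalSpace Z)
    (u : ℕ → Z) (hu : ∀ y : Z, ¬ MapClusterPt y atTop u) :
    ∃ (g : ℕ → Z → ℝ) (G : ℕ → Set Z),
      (∀ k, Continuous (g k)) ∧ (∀ k, g k (u k) = 1) ∧
      (∀ k z, z ∉ G k → g k z = 0) ∧ LocallyFinite G := by
  classical
  -- each point has an open neighborhood containing only finitely many terms
  have hnbhd : ∀ y : Z, ∃ O : Set Z, IsOpen O ∧ y ∈ O ∧ {k | u k ∈ O}.Finite := by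
    intro y
    have := hu y
    rw [mapClusterPt_iff_frequently] at this
    push_neg at this
    obtain ⟨s, hs, hev⟩ := this
    obtain ⟨m, hm⟩ := Filter.eventually_atTop.1 hev
    obtain ⟨O, hOs, hO, hyO⟩ := mem_nhds_iff.1 hs
    refine ⟨O, hO, hyO, (Set.finite_Iio m).subset ?_⟩
    intro k hk
    by_contra hlt
    exact hm k (by simpa using hlt) (hOs hk)
  set C : ℕ → Set Z := fun k => closure {u k} with hC
  have hClf : LocallyFinite C := by
    intro y
    obtain ⟨O, hO, hyO, hfin⟩ := hnbhd y
    refine ⟨O, hO.mem_nhds hyO, hfin.subset ?_⟩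
    intro k hk
    obtain ⟨w, hw1, hw2⟩ := hk
    have := mem_closure_iff.1 hw1 O hO hw2
    obtain ⟨w', hw'O, hw'⟩ := this
    rw [Set.mem_singleton_iff] at hw'
    show u k ∈ O
    rw [← hw']
    exact hw'O
  have hCclosed : ∀ k, IsClosed (C k) := fun k => isClosed_closure
  set E : ℕ → Set Z := fun m => ⋃ k, C (m + k) with hE
  have hEclosed : ∀ m, IsClosed (E m) := by
    intro m
    refine LocallyFinite.isClosed_iUnion ?_ (fun k => hCclosed _)
    exact hClf.comp_injective (fun a b h => by omega)
  have hEanti : ∀ {j m}, j ≤ m → E m ⊆ E j := by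
    intro j m h x hx
    obtain ⟨k, hk⟩ := Set.mem_iUnion.1 hx
    exact Set.mem_iUnion.2 ⟨m - j + k, by rw [show j + (m - j + k) = m + k by omega]; exact hk⟩
  have hEexists : ∀ z : Z, ∃ m, z ∉ E m := by
    intro z
    obtain ⟨O, hOnb, hfin⟩ := hClf z
    obtain ⟨m0, hm0⟩ := hfin.bddAbove
    refine ⟨m0 + 1, fun hz => ?_⟩
    obtain ⟨k, hk⟩ := Set.mem_iUnion.1 hz
    have : m0 + 1 + k ∈ {i | (C i ∩ O).Nonempty} := ⟨z, hk, mem_of_mem_nhds hOnb⟩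
    have := hm0 this
    omega
  set G : ℕ → Set Z := fun m =>
    (⋃ j ∈ Finset.range (m+1), ⋃ i ∈ Finset.range (m+1), closure (S (E j)ᶜ i))ᶜ with hG
  have hGopen : ∀ m, IsOpen (G m) := by
    intro m
    exact (isClosed_biUnion_finset fun j _ =>
      isClosed_biUnion_finset fun i _ => isClosed_closure).isOpen_compl
  have hEG : ∀ m, E m ⊆ G m := by
    intro m x hx hmem
    simp only [Set.mem_iUnion, Finset.mem_range] at hmem
    obtain ⟨j, hj, i, _, hcl⟩ := hmem
    have h1 : closure (S (E j)ᶜ i) ⊆ (E j)ᶜ := ((hS (E j)ᶜ (hEclosed j).isOpen_compl).1 i).2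
    exact h1 hcl (hEanti (by omega) hx)
  have hGlf : LocallyFinite G := by
    intro z
    obtain ⟨m, hm⟩ := hEexists z
    obtain ⟨i, hi⟩ := hS.mem_stratum (hEclosed m).isOpen_compl hm
    refine ⟨S (E m)ᶜ i, (((hS (E m)ᶜ (hEclosed m).isOpen_compl).1 i).1).mem_nhds hi,
      (Set.finite_Iio (max m i + 1)).subset ?_⟩
    intro l hl
    obtain ⟨w, hw1, hw2⟩ := hl
    by_contra hbig
    simp only [Set.mem_Iio, not_lt] at hbig
    refine hw1 ?_
    simp only [Set.mem_iUnion, Finset.mem_range]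
    exact ⟨m, by omega, i, by omega, subset_closure hw2⟩
  -- Urysohn bumps
  have hurysohn : ∀ k, ∃ g : Z → ℝ, Continuous g ∧ g (u k) = 1 ∧ ∀ z, z ∉ G k → g z = 0 := by
    intro k
    have hCE : C k ⊆ E k := fun x hx => Set.mem_iUnion.2 ⟨0, by simpa using hx⟩
    have hCG : C k ⊆ G k := hCE.trans (hEG k)
    have hdisj : Disjoint (G k)ᶜ (C k) := by
      rw [Set.disjoint_left]
      intro x hx hxC
      exact hx (hCG hxC)
    obtain ⟨f, hf0, hf1, _⟩ := exists_continuous_zero_one_of_isClosed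
      (isClosed_compl_iff.2 (hGopen k)) (hCclosed k) hdisj
    refine ⟨⇑f, f.continuous, ?_, ?_⟩
    · have := hf1 (subset_closure (Set.mem_singleton (u k)))
      simpa using this
    · intro z hz
      have := hf0 (by simpa using hz)
      simpa using this
  choose g hg1 hg2 hg3 using hurysohn
  exact ⟨g, G, hg1, hg2, hg3, hGlf⟩

end Aux


/-- If `Z` is stratifiable, `S_ω × Z` is a `k_R`-space, and `{Z_n}` is a decreasing
network at a point `z₀ ∈ Z`, then some `Z_n` has compact closure. -/
theorem decreasing_network_compact_closure (Z : Type*) [TopologicalSpace Z]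
    (hstr : IsStratifiable Z) (z₀ : Z)
    (hkR : IsKRSpace (Fan ℕ × Z))
    (Zn : ℕ → Set Z)
    (hmem : ∀ n, z₀ ∈ Zn n)
    (hdec : ∀ n, Zn (n + 1) ⊆ Zn n)
    (hnet : ∀ V ∈ 𝓝 z₀, ∃ n, Zn n ⊆ V) :
    ∃ n, IsCompact (closure (Zn n)) := by
  classical
  obtain ⟨S, hS⟩ := hstr
  have hSt : StratOn S := hS
  haveI hnorm : NormalSpace Z := hSt.normalSpace
  by_contra hnc
  push_neg at hnc
  -- cluster-free sequences in each closure (Zn n)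
  have hseq : ∀ n, ∃ u : ℕ → Z, (∀ m, u m ∈ closure (Zn n)) ∧
      ∀ y : Z, ¬ MapClusterPt y atTop u := by
    intro n
    by_contra hcon
    push_neg at hcon
    exact hnc n (hSt.isCompact_of_cc isClosed_closure fun u hu => hcon u hu)
  choose useq huA hucl using hseq
  have hbump := fun n => hSt.bump_family hnorm (useq n) (hucl n)
  choose g G hg1 hg2 hg3 hGlf using hbump
  -- the test function
  set f : Fan ℕ × Z → ℝ :=
    fun p => Option.elim (p.1 : Option (ℕ × ℕ)) 0 (fun q => g q.1 q.2 p.2) with hf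
  have hfapex : ∀ z : Z, f (Fan.apex, z) = 0 := fun z => rfl
  have hfpt : ∀ n k (z : Z), f (Fan.pt n k, z) = g n k z := fun n k z => rfl
  -- f is continuous on every compact set
  have hcompact : ∀ K : Set (Fan ℕ × Z), IsCompact K → ContinuousOn f K := by
    intro K hK x hxK
    rcases Fan.cases' x.1 with hx1 | ⟨n, k, hx1⟩
    · -- at a point over the apex
      have hKT : IsCompact (Prod.fst '' K) := hK.image continuous_fst
      have hFfin := Fan.finite_spokes hKT
      set Fs := hFfin.toFinset with hFs
      have hVn : ∀ n : ℕ, ∃ V ∈ 𝓝 x.2, ∃ m : ℕ,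
          ∀ k, m ≤ k → ∀ w ∈ V, w ∉ G n k := by
        intro n
        obtain ⟨V, hV, hfin⟩ := hGlf n x.2
        obtain ⟨m0, hm0⟩ := hfin.bddAbove
        refine ⟨V, hV, m0 + 1, fun k hk w hwV hwG => ?_⟩
        have : k ∈ {i | (G n i ∩ V).Nonempty} := ⟨w, hwG, hwV⟩
        have := hm0 this
        omega
      choose V hVmem m hm using hVn
      set M : ℕ := Fs.sup m with hM
      set W : Set Z := ⋂ n ∈ Fs, V n with hWdef
      have hWnb : W ∈ 𝓝 x.2 := (Filter.biInter_finset_mem Fs).2 fun n _ => hVmem n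
      set T := {y : Fan ℕ | ∀ α k, y = Fan.pt α k → α ∈ Fs → M ≤ k} with hT
      have hTW : T ×ˢ W ∈ 𝓝 x := by
        rw [show x = (x.1, x.2) from rfl]
        refine prod_mem_nhds ((Fan.isOpen_tail Fs M).mem_nhds ?_) hWnb
        rw [hx1]
        exact Fan.apex_mem_tail Fs M
      have hzero : ∀ p ∈ (T ×ˢ W) ∩ K, f p = 0 := by
        rintro ⟨p1, p2⟩ ⟨⟨hpT, hpW⟩, hpK⟩
        rcases Fan.cases' p1 with hp1 | ⟨α, k, hp1⟩
        · rw [hp1]; exact hfapex p2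
        · have hαF : α ∈ Fs := by
            rw [hFs, Set.Finite.mem_toFinset]
            exact ⟨k, by rw [← hp1]; exact Set.mem_image_of_mem Prod.fst hpK⟩
          have hkM : M ≤ k := hpT α k hp1 hαF
          have hmn : m α ≤ M := Finset.le_sup hαF
          have hWV : p2 ∈ V α := by
            have := Set.mem_iInter₂.1 hpW α hαF
            exact this
          have hng : p2 ∉ G α k := hm α k (le_trans hmn hkM) p2 hWV
          rw [hp1, hfpt]
          exact hg3 α k p2 hng
      refine (continuousWithinAt_const (b := (0 : ℝ))).congr_of_eventuallyEq ?_ ?_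
      · filter_upwards [Filter.inter_mem (mem_nhdsWithin_of_mem_nhds hTW)
          self_mem_nhdsWithin] with p hp
        exact hzero p hp
      · rw [show x = (x.1, x.2) from rfl, hx1]
        exact hfapex x.2
    · -- at an isolated point
      have hcont : ContinuousWithinAt (fun p : Fan ℕ × Z => g n k p.2) K x :=
        ((hg1 n k).comp continuous_snd).continuousWithinAt
      refine hcont.congr_of_eventuallyEq ?_ ?_
      · have hopen : IsOpen ({Fan.pt n k} ×ˢ (Set.univ : Set Z)) :=
          (Fan.isOpen_singleton_pt n k).prod isOpen_univ
        have hxmem : x ∈ ({Fan.pt n k} ×ˢ (Set.univ : Set Z)) := ⟨hx1, trivial⟩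
        filter_upwards [mem_nhdsWithin_of_mem_nhds (hopen.mem_nhds hxmem)] with p hp
        obtain ⟨hp1, -⟩ := hp
        rw [show p = (p.1, p.2) from rfl, Set.mem_singleton_iff.1 hp1]
        exact hfpt n k p.2
      · rw [show x = (x.1, x.2) from rfl, hx1]
        exact hfpt n k x.2
  -- f is continuous, so continuous at the apex over z₀ : contradiction
  have hcont := hkR f hcompact
  have hopen : IsOpen (f ⁻¹' (Set.Iio (1/2 : ℝ))) := isOpen_Iio.preimage hcont
  have hmem0 : (Fan.apex, z₀) ∈ f ⁻¹' (Set.Iio (1/2 : ℝ)) := by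
    simp only [Set.mem_preimage, hfapex z₀, Set.mem_Iio]
    norm_num
  obtain ⟨O, V, hO, hV, hOa, hVz, hOV⟩ := isOpen_prod_iff.1 hopen Fan.apex z₀ hmem0
  obtain ⟨n, hn⟩ := hnet V (hV.mem_nhds hVz)
  have hfin := Fan.tail_of_isOpen hO hOa n
  obtain ⟨k, hk⟩ := hfin.infinite_compl.nonempty
  rw [Set.mem_compl_iff, Set.mem_setOf_eq, not_not] at hk
  have hQ : IsOpen {w : Z | 1/2 < g n k w} := isOpen_lt continuous_const (hg1 n k)
  have hmemQ : useq n k ∈ {w : Z | 1/2 < g n k w} := by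
    rw [Set.mem_setOf_eq, hg2 n k]
    norm_num
  obtain ⟨z', hz'Q, hz'Z⟩ := mem_closure_iff.1 (huA n k) _ hQ hmemQ
  have hlt : f (Fan.pt n k, z') < 1/2 := hOV ⟨hk, hn hz'Z⟩
  rw [hfpt] at hlt
  exact absurd hlt (not_lt.2 (le_of_lt hz'Q))
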